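/- Let k ≥ 2 and let G_k be the whiskered cycle graph on vertices {x_i, y_i : i ∈ [2k]}. If C is a minimal vertex cover of G_k and σ ⊆ {x_1, …, x_{2k}} satisfies σ ∩ C = ∅ and |σ| = k, then either σ = {x_1, x_3, …, x_{2k−1}} and C = {y_1, x_2, y_3, x_4, …, y_{2k−1}, x_{2k}}, or σ = {x_2, x_4, …, x_{2k}} and C = {x_1, y_2, x_3, y_4, …, x_{2k−1}, y_{2k}}. -/
import Mathlib

open scoped Classical

namespace PaperHS

/-- A set of vertices is a vertex cover of a simple graph if it meets every edge. -/
def IsVertexCover {U : Type*} (H : SimpleGraph U) (C : Set U) : Prop :=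
  ∀ ⦃a b : U⦄, H.Adj a b → a ∈ C ∨ b ∈ C

/-- A vertex cover is minimal if no proper subset is a vertex cover. -/
def IsMinVertexCover {U : Type*} (H : SimpleGraph U) (C : Set U) : Prop :=
  IsVertexCover H C ∧ ∀ D : Set U, D ⊂ C → ¬ IsVertexCover H D

/-- The whiskered cycle `G_k = W(C_{2k})`: the vertex `x_{i+1}` of the cycle is
encoded as `Sum.inl i` and the whisker vertex `y_{i+1}` as `Sum.inr i`
(for `i : Fin (2*k)`); the edges are `{x_i, y_i}` and `{x_i, x_{i+1}}`
(indices mod `2k`). -/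
def whiskCycle (k : ℕ) : SimpleGraph (Fin (2 * k) ⊕ Fin (2 * k)) :=
  SimpleGraph.fromRel (fun x y =>
    match x, y with
    | Sum.inl i, Sum.inl j => (j : ℕ) = ((i : ℕ) + 1) % (2 * k)
    | Sum.inl i, Sum.inr j => i = j
    | _, _ => False)

lemma fin_val_add_one {n : ℕ} [NeZero n] (hn : 1 < n) (i : Fin n) :
    ((i + 1 : Fin n) : ℕ) = ((i : ℕ) + 1) % n := by
  rw [Fin.add_def, Fin.val_one', Nat.mod_eq_of_lt hn]

lemma fin_ne_add_one {n : ℕ} [NeZero n] (hn : 1 < n) (i : Fin n) : i ≠ i + 1 := by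
  intro h
  have hv := congrArg Fin.val h
  rw [fin_val_add_one hn] at hv
  rcases Nat.lt_or_ge ((i : ℕ) + 1) n with h' | h'
  · rw [Nat.mod_eq_of_lt h'] at hv; omega
  · have h2 : (i : ℕ) + 1 = n := by have := i.isLt; omega
    rw [h2, Nat.mod_self] at hv
    omega

lemma alt_iff {n : ℕ} [NeZero n] (S : Set (Fin n)) (hsub : ∀ i ∈ S, i + 1 ∉ S)
    (hcard : n = 2 * S.ncard) : ∀ i : Fin n, i ∈ S ↔ i + 1 ∉ S := by
  have hinj : Function.Injective (fun i : Fin n => i + 1) := add_left_injective 1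
  have himg : (fun i : Fin n => i + 1) '' S ⊆ Sᶜ := by
    rintro _ ⟨i, hi, rfl⟩
    exact Set.mem_compl (hsub i hi)
  have hcc : S.ncard + Sᶜ.ncard = n := by
    rw [Set.ncard_add_ncard_compl]
    simp [Nat.card_eq_fintype_card]
  have heq : (fun i : Fin n => i + 1) '' S = Sᶜ := by
    apply Set.eq_of_subset_of_ncard_le himg
    rw [Set.ncard_image_of_injective _ hinj]; omega
  intro i
  constructor
  · exact hsub i
  · intro h
    have h2 : i + 1 ∈ Sᶜ := Set.mem_compl h
    rw [← heq] at h2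
    obtain ⟨a, ha, hae⟩ := h2
    have : a = i := hinj hae
    rwa [← this]

lemma alt_even {n : ℕ} [NeZero n] (hn : 1 < n) (S : Set (Fin n))
    (halt : ∀ i : Fin n, i ∈ S ↔ i + 1 ∉ S) :
    ∀ i : Fin n, i ∈ S ↔ (Even (i : ℕ) ↔ (0 : Fin n) ∈ S) := by
  have key : ∀ m (h : m < n), ((⟨m, h⟩ : Fin n) ∈ S ↔ (Even m ↔ (0 : Fin n) ∈ S)) := by
    intro m
    induction m with
    | zero =>
      intro h
      have h0 : (⟨0, h⟩ : Fin n) = 0 := by ext; simp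
      rw [h0]; simp
    | succ m ih =>
      intro h
      have hm : m < n := by omega
      have hstep : (⟨m, hm⟩ : Fin n) + 1 = ⟨m + 1, h⟩ := by
        ext
        rw [fin_val_add_one hn, Nat.mod_eq_of_lt h]
      rw [← hstep]
      have h1 := halt ⟨m, hm⟩
      have h2 := ih hm
      have h4 : (⟨m, hm⟩ : Fin n) + 1 ∈ S ↔ ¬(Even m ↔ (0 : Fin n) ∈ S) := by
        rw [← h2]; tauto
      rw [h4, Nat.even_add_one]
      tauto
  intro i
  have := key i.val i.isLt
  simpa using this

theorem statement7 (k : ℕ) (hk : 2 ≤ k)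
    (C : Set (Fin (2 * k) ⊕ Fin (2 * k)))
    (hC : IsMinVertexCover (whiskCycle k) C)
    (σ : Set (Fin (2 * k) ⊕ Fin (2 * k)))
    (hσx : σ ⊆ Set.range Sum.inl)
    (hdisj : σ ∩ C = ∅)
    (hcard : σ.ncard = k) :
    (σ = Sum.inl '' {i : Fin (2 * k) | Even (i : ℕ)} ∧
        C = Sum.inr '' {i : Fin (2 * k) | Even (i : ℕ)} ∪
            Sum.inl '' {i : Fin (2 * k) | ¬ Even (i : ℕ)}) ∨
    (σ = Sum.inl '' {i : Fin (2 * k) | ¬ Even (i : ℕ)} ∧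
        C = Sum.inr '' {i : Fin (2 * k) | ¬ Even (i : ℕ)} ∪
            Sum.inl '' {i : Fin (2 * k) | Even (i : ℕ)}) := by
  classical
  haveI : NeZero (2 * k) := ⟨by omega⟩
  have hn1 : 1 < 2 * k := by omega
  set S : Set (Fin (2 * k)) := Sum.inl ⁻¹' σ with hS
  have hσS : σ = Sum.inl '' S := by
    ext a
    constructor
    · intro ha
      obtain ⟨i, rfl⟩ := hσx ha
      exact ⟨i, ha, rfl⟩
    · rintro ⟨i, hi, rfl⟩
      exact hi
  have hScard : S.ncard = k := by
    rw [hσS, Set.ncard_image_of_injective _ Sum.inl_injective] at hcard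
    exact hcard
  have hnotC : ∀ i ∈ S, Sum.inl i ∉ C := by
    intro i hi hiC
    have : Sum.inl i ∈ σ ∩ C := ⟨hi, hiC⟩
    rw [hdisj] at this
    exact this
  have adj_xy : ∀ i : Fin (2 * k), (whiskCycle k).Adj (Sum.inl i) (Sum.inr i) := by
    intro i
    rw [whiskCycle, SimpleGraph.fromRel_adj]
    exact ⟨by simp, Or.inl rfl⟩
  have adj_xx : ∀ i : Fin (2 * k), (whiskCycle k).Adj (Sum.inl i) (Sum.inl (i + 1)) := by
    intro i
    rw [whiskCycle, SimpleGraph.fromRel_adj]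
    refine ⟨by simpa using fin_ne_add_one hn1 i, Or.inl ?_⟩
    show ((i + 1 : Fin (2 * k)) : ℕ) = ((i : ℕ) + 1) % (2 * k)
    exact fin_val_add_one hn1 i
  have hind : ∀ i ∈ S, i + 1 ∉ S := by
    intro i hi hi1
    rcases hC.1 (adj_xx i) with h | h
    · exact hnotC i hi h
    · exact hnotC _ hi1 h
  have halt := alt_iff S hind (by omega)
  have heven := alt_even hn1 S halt
  -- D is a vertex cover
  have hDcov : IsVertexCover (whiskCycle k) (Sum.inr '' S ∪ Sum.inl '' Sᶜ) := by
    rintro a b hadj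
    rw [whiskCycle, SimpleGraph.fromRel_adj] at hadj
    obtain ⟨hne, hrel⟩ := hadj
    rcases a with i | i <;> rcases b with j | j
    · rcases hrel with h | h
      · have hj : j = i + 1 := by
          ext; rw [fin_val_add_one hn1]; exact h
        by_cases hi : i ∈ S
        · right; right
          exact ⟨j, by rw [hj]; exact hind i hi, rfl⟩
        · left; right
          exact ⟨i, hi, rfl⟩
      · have hi : i = j + 1 := by
          ext; rw [fin_val_add_one hn1]; exact h
        by_cases hjS : j ∈ S
        · left; right
          exact ⟨i, by rw [hi]; exact hind j hjS, rfl⟩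
        · right; right
          exact ⟨j, hjS, rfl⟩
    · rcases hrel with h | h
      · subst h
        by_cases hi : i ∈ S
        · right; left; exact ⟨i, hi, rfl⟩
        · left; right; exact ⟨i, hi, rfl⟩
      · exact h.elim
    · rcases hrel with h | h
      · exact h.elim
      · by_cases hi : i ∈ S
        · left; left; exact ⟨i, hi, rfl⟩
        · right; right; exact ⟨j, by rw [h]; exact hi, rfl⟩
    · rcases hrel with h | h <;> exact h.elim
  -- D ⊆ C
  have hDC : Sum.inr '' S ∪ Sum.inl '' Sᶜ ⊆ C := by
    rintro a (⟨i, hi, rfl⟩ | ⟨j, hj, rfl⟩)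
    · rcases hC.1 (adj_xy i) with h | h
      · exact absurd h (hnotC i hi)
      · exact h
    · have hj1 : j - 1 ∈ S := by
        have h5 := halt (j - 1)
        rw [sub_add_cancel] at h5
        tauto
      have hadj := adj_xx (j - 1)
      rw [sub_add_cancel] at hadj
      rcases hC.1 hadj with h | h
      · exact absurd h (hnotC _ hj1)
      · exact h
  -- C = D
  have hCD : C = Sum.inr '' S ∪ Sum.inl '' Sᶜ := by
    by_contra hne
    exact hC.2 _ (Set.ssubset_iff_subset_ne.mpr ⟨hDC, fun h => hne h.symm⟩) hDcov
  by_cases h0 : (0 : Fin (2 * k)) ∈ S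
  · left
    have hSeq : S = {i : Fin (2 * k) | Even (i : ℕ)} := by
      ext i
      have := heven i
      simp only [h0, iff_true] at this
      simpa using this
    have hScomp : Sᶜ = {i : Fin (2 * k) | ¬ Even (i : ℕ)} := by
      rw [hSeq]; ext i; simp
    constructor
    · rw [hσS, hSeq]
    · rw [hCD, hScomp, hSeq]
  · right
    have hSeq : S = {i : Fin (2 * k) | ¬ Even (i : ℕ)} := by
      ext i
      have := heven i
      simp only [h0, iff_false] at this
      simpa using this
    have hScomp : Sᶜ = {i : Fin (2 * k) | Even (i : ℕ)} := by
      rw [hSeq]; ext i; simp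
    constructor
    · rw [hσS, hSeq]
    · rw [hCD, hScomp, hSeq]

end PaperHS
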